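/- arXiv:2404.00624 — 11 statements merged into one kernel-verified Lean document; each statement's English description precedes it below -/
import Mathlib

section
/- If N is a friend of 10, then there exists a prime p dividing N with p ≡ 1 (mod 10). -/
open ArithmeticFunction Finset
open scoped ArithmeticFunction.sigma

-- aux: sigma of 5^k is 1 mod 5
lemma sigma5pow_mod (k : ℕ) : (σ 1 (5 ^ k)) % 5 = 1 := by
  rw [sigma_one_apply_prime_pow (by norm_num)]
  rw [Finset.sum_range_succ']
  have : (5:ℕ) ∣ ∑ i ∈ Finset.range k, 5 ^ (i + 1) :=
    Finset.dvd_sum fun i _ => dvd_pow_self 5 (Nat.succ_ne_zero i)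
  omega

-- aux: if 5 ∣ ∑_{i<e+1} p^i with p prime, p ≠ 5, e even, then p % 5 = 1
lemma key_mod5 (p e : ℕ) (hp : p.Prime) (hne : p ≠ 5) (he : e % 2 = 0)
    (hdvd : 5 ∣ ∑ i ∈ Finset.range (e + 1), p ^ i) : p % 5 = 1 := by
  have h5 : Fact (Nat.Prime 5) := ⟨by norm_num⟩
  set r : ZMod 5 := (p : ZMod 5) with hr
  have hr0 : r ≠ 0 := by
    rw [hr, Ne, ZMod.natCast_eq_zero_iff]
    intro h
    exact hne ((Nat.prime_dvd_prime_iff_eq (by norm_num) hp).mp h).symm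
  have hr1 : r = 1 := by
    by_contra hne1
    have hsum : (∑ i ∈ Finset.range (e + 1), r ^ i) = 0 := by
      have := (ZMod.natCast_eq_zero_iff _ 5).mpr hdvd
      push_cast at this
      exact this
    rw [geom_sum_eq hne1] at hsum
    have hr1' : r - 1 ≠ 0 := sub_ne_zero.mpr hne1
    have hpow : r ^ (e + 1) = 1 := by
      field_simp at hsum
      linear_combination hsum
    have h4 : r ^ 4 = 1 := by
      have := ZMod.pow_card_sub_one_eq_one hr0
      norm_num at this
      exact this
    have hord1 : orderOf r ∣ e + 1 := orderOf_dvd_of_pow_eq_one hpow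
    have hord4 : orderOf r ∣ 4 := orderOf_dvd_of_pow_eq_one h4
    have : orderOf r ∣ Nat.gcd (e + 1) 4 := Nat.dvd_gcd hord1 hord4
    have hg : Nat.gcd (e + 1) 4 = 1 := by
      have h2 : ¬ (2 ∣ e + 1) := by omega
      have := Nat.gcd_dvd_right (e+1) 4
      have := Nat.gcd_dvd_left (e+1) 4
      have hle : Nat.gcd (e+1) 4 ≤ 4 := Nat.le_of_dvd (by norm_num) ‹Nat.gcd (e+1) 4 ∣ 4›
      rcases Nat.lt_or_ge (Nat.gcd (e+1) 4) 5 with h | h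
      · interval_cases h2 : Nat.gcd (e+1) 4 <;> omega
      · omega
    rw [hg, Nat.dvd_one, orderOf_eq_one_iff] at this
    exact hne1 this
  have : ((p : ℕ) : ZMod 5) = ((1 : ℕ) : ZMod 5) := by rw [← hr, hr1]; norm_num
  have := (ZMod.natCast_eq_natCast_iff _ _ _).mp this
  unfold Nat.ModEq at this
  omega

lemma sum_pow_mod_two (p e : ℕ) (hp : p % 2 = 1) :
    (∑ i ∈ Finset.range (e + 1), p ^ i) % 2 = (e + 1) % 2 := by
  induction e with
  | zero => norm_num
  | succ n ih =>
    rw [Finset.sum_range_succ]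
    have : p ^ (n + 1) % 2 = 1 := by
      rw [Nat.pow_mod, hp, one_pow]; rfl
    omega

/-- If `N` is a friend of 10, then some prime factor of `N` is congruent to 1 mod 10. -/
theorem friend_of_ten_exists_prime_one_mod_ten (N : ℕ) (hN : 10 < N)
    (hfriend : 5 * (ArithmeticFunction.sigma 1) N = 9 * N) :
    ∃ p : ℕ, p.Prime ∧ p ∣ N ∧ p % 10 = 1 := by
  have hN0 : N ≠ 0 := by omega
  -- 5 ∣ N
  have h5N : 5 ∣ N := by
    have h1 : (5:ℕ) ∣ 9 * N := hfriend ▸ Dvd.intro _ rfl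
    omega
  -- N is odd
  have hodd : ¬ 2 ∣ N := by
    intro h2N
    obtain ⟨k, hk⟩ : 10 ∣ N := by omega
    have hk2 : 2 ≤ k := by omega
    have hsub : ({1, k, 2*k, 5*k, 10*k} : Finset ℕ) ⊆ N.divisors := by
      intro d hd
      simp only [Finset.mem_insert, Finset.mem_singleton] at hd
      rw [Nat.mem_divisors]
      refine ⟨?_, hN0⟩
      rcases hd with rfl | rfl | rfl | rfl | rfl
      · exact one_dvd _
      · exact ⟨10, by omega⟩
      · exact ⟨5, by omega⟩
      · exact ⟨2, by omega⟩
      · exact ⟨1, by omega⟩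
    have h1 : (1:ℕ) ∉ ({k, 2*k, 5*k, 10*k} : Finset ℕ) := by simp; omega
    have h2 : k ∉ ({2*k, 5*k, 10*k} : Finset ℕ) := by simp; omega
    have h3 : 2*k ∉ ({5*k, 10*k} : Finset ℕ) := by simp; omega
    have h4 : 5*k ∉ ({10*k} : Finset ℕ) := by simp; omega
    have hsum : ∑ d ∈ ({1, k, 2*k, 5*k, 10*k} : Finset ℕ), d = 1 + 18*k := by
      rw [Finset.sum_insert h1, Finset.sum_insert h2, Finset.sum_insert h3,
        Finset.sum_insert h4, Finset.sum_singleton]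
      ring
    have hle : 1 + 18*k ≤ σ 1 N := by
      rw [sigma_one_apply, ← hsum]
      exact Finset.sum_le_sum_of_subset hsub
    omega
  -- split off the 5-part
  set k := N.factorization 5 with hkdef
  set m := N / 5 ^ k with hmdef
  have hm0 : m ≠ 0 := (Nat.ordCompl_pos 5 hN0).ne'
  have hNsplit : 5 ^ k * m = N := Nat.ordProj_mul_ordCompl_eq_self N 5
  have hcop : Nat.Coprime (5 ^ k) m :=
    (Nat.coprime_ordCompl (by norm_num) hN0).pow_left _
  have hmdvd : m ∣ N := Nat.ordCompl_dvd N 5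
  have h5m : ¬ 5 ∣ m := Nat.not_dvd_ordCompl (by norm_num) hN0
  have hmul : σ 1 N = σ 1 (5 ^ k) * σ 1 m := by
    rw [← hNsplit]
    exact isMultiplicative_sigma.map_mul_of_coprime hcop
  have hk1 : 1 ≤ k := by
    rw [hkdef]
    exact (Nat.Prime.dvd_iff_one_le_factorization (by norm_num) hN0).mp h5N
  have hs5 : (σ 1 (5 ^ k)) % 5 = 1 := sigma5pow_mod k
  -- k ≥ 2
  have hk2 : 2 ≤ k := by
    by_contra h
    have hk1' : k = 1 := by omega
    rw [hmul, hk1'] at hfriend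
    have h6 : σ 1 (5 ^ 1) = 6 := by
      rw [ArithmeticFunction.sigma_one_apply_prime_pow (by norm_num)]; decide
    rw [h6] at hfriend
    rw [hk1'] at hNsplit
    norm_num at hNsplit
    have hmodd : ¬ 2 ∣ m := fun h => hodd (h.trans hmdvd)
    -- 30 σ m = 9 N = 9 * 5 * m ⇒ 2 σ m = 3 m ⇒ m even
    omega
  -- 5 ∣ σ 1 m
  have h5sm : 5 ∣ σ 1 m := by
    have h25 : 25 ∣ 9 * N := by
      rw [← hNsplit]
      exact Dvd.dvd.mul_left (dvd_mul_of_dvd_left (pow_dvd_pow 5 hk2) m) 9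
    rw [← hfriend, hmul] at h25
    have : 5 ∣ σ 1 (5 ^ k) * σ 1 m := by omega
    rcases (Nat.Prime.dvd_mul (by norm_num)).mp this with h | h
    · omega
    · exact h
  -- factor σ 1 m as a product over prime factors
  have hprod : σ 1 m = ∏ p ∈ m.primeFactors, ∑ i ∈ Finset.range (m.factorization p + 1), p ^ i := by
    rw [sigma_one_apply]
    exact Nat.sum_divisors hm0
  rw [hprod] at h5sm
  obtain ⟨p, hpmem, hpdvd⟩ := (Nat.prime_iff.mp (by norm_num : Nat.Prime 5)).exists_mem_finset_dvd h5sm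
  have hp : p.Prime := Nat.prime_of_mem_primeFactors hpmem
  have hpm : p ∣ m := Nat.dvd_of_mem_primeFactors hpmem
  have hpN : p ∣ N := hpm.trans hmdvd
  have hp5 : p ≠ 5 := by rintro rfl; exact h5m hpm
  have hp2 : p ≠ 2 := by rintro rfl; exact hodd hpN
  -- σ N is odd, so σ(p^e) odd, so e even
  set e := m.factorization p with hedef
  have hsodd : σ 1 N % 2 = 1 := by omega
  have hterm_dvd : (∑ i ∈ Finset.range (e + 1), p ^ i) ∣ σ 1 N := by
    rw [hmul, hprod]
    exact Dvd.dvd.mul_left (Finset.dvd_prod_of_mem _ hpmem) _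
  have htodd : (∑ i ∈ Finset.range (e + 1), p ^ i) % 2 = 1 := by
    rcases Nat.even_or_odd (∑ i ∈ Finset.range (e + 1), p ^ i) with hev | hod
    · have h2d : 2 ∣ σ 1 N := hev.two_dvd.trans hterm_dvd
      omega
    · exact Nat.odd_iff.mp hod
  have hpodd : p % 2 = 1 := Nat.odd_iff.mp (hp.odd_of_ne_two hp2)
  have he : e % 2 = 0 := by
    have := sum_pow_mod_two p e hpodd
    omega
  have h51 := key_mod5 p e hp hp5 he hpdvd
  exact ⟨p, hp, hpN, by omega⟩
end

section
/- If N is a friend of 10, then there exists a prime q dividing N with q ≡ 1 (mod 6). -/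
open Finset ArithmeticFunction
open scoped ArithmeticFunction.sigma

lemma geom3 (p : ℕ) (hp : p % 3 = 2) (b : ℕ) :
    (∑ k ∈ Finset.range (2*b+1), p^k) % 3 = 1 := by
  induction b with
  | zero => simp
  | succ b ih =>
    have h1 : p ^ (2*b+1) % 3 = 2 := by
      rw [Nat.pow_mod, hp, pow_succ, pow_mul, Nat.mul_mod, Nat.pow_mod]
      norm_num
    have h2 : p ^ (2*b+2) % 3 = 1 := by
      rw [Nat.pow_mod, hp, show 2*b+2 = 2*(b+1) by ring, pow_mul, Nat.pow_mod]
      norm_num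
    have e : 2*(b+1)+1 = (2*b+1) + 1 + 1 := by ring
    rw [e, Finset.sum_range_succ, Finset.sum_range_succ, Nat.add_mod,
      Nat.add_mod (∑ k ∈ Finset.range (2*b+1), p^k), ih,
      show 2*b+1+1 = 2*b+2 by ring, h2, h1]

lemma geom3' (a : ℕ) : (∑ k ∈ Finset.range (a+1), 3^k) % 3 = 1 := by
  rw [Finset.sum_range_succ']
  have h : (3:ℕ) ∣ ∑ k ∈ Finset.range a, 3^(k+1) :=
    Finset.dvd_sum fun i _ => dvd_pow_self 3 (Nat.succ_ne_zero i)
  obtain ⟨c, hc⟩ := h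
  rw [hc]
  omega

/-- If `N` is a friend of 10, then some prime factor of `N` is congruent to 1 mod 6. -/
theorem friend_of_ten_exists_prime_one_mod_six (N : ℕ) (hN : 10 < N)
    (hfriend : 5 * (ArithmeticFunction.sigma 1) N = 9 * N) :
    ∃ q : ℕ, q.Prime ∧ q ∣ N ∧ q % 6 = 1 := by
  have hN0 : N ≠ 0 := by omega
  -- 5 ∣ N
  have h5 : 5 ∣ N := by
    have : (5:ℕ) ∣ 9 * N := ⟨σ 1 N, hfriend.symm⟩
    exact (Nat.Coprime.dvd_of_dvd_mul_left (by norm_num) this)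
  -- N odd
  have hodd : N % 2 = 1 := by
    rcases Nat.even_or_odd N with he | ho
    · exfalso
      obtain ⟨k, hk⟩ : 10 ∣ N := Nat.Coprime.mul_dvd_of_dvd_of_dvd (by norm_num) he.two_dvd h5
      have hk2 : 2 ≤ k := by omega
      have hsub : ({10*k, 5*k, 2*k, k, 1} : Finset ℕ) ⊆ N.divisors := by
        intro d hd
        simp only [Finset.mem_insert, Finset.mem_singleton] at hd
        rw [Nat.mem_divisors]
        rcases hd with rfl | rfl | rfl | rfl | rfl
        · exact ⟨⟨1, by omega⟩, hN0⟩
        · exact ⟨⟨2, by omega⟩, hN0⟩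
        · exact ⟨⟨5, by omega⟩, hN0⟩
        · exact ⟨⟨10, by omega⟩, hN0⟩
        · exact ⟨one_dvd N, hN0⟩
      have hsum : ∑ d ∈ ({10*k, 5*k, 2*k, k, 1} : Finset ℕ), d = 18*k + 1 := by
        rw [Finset.sum_insert (by simp; omega), Finset.sum_insert (by simp; omega),
          Finset.sum_insert (by simp; omega), Finset.sum_insert (by simp; omega),
          Finset.sum_singleton]
        ring
      have hle : 18*k + 1 ≤ σ 1 N := by
        rw [sigma_one_apply, ← hsum]
        exact Finset.sum_le_sum_of_subset hsub
      omega
    · exact Nat.odd_iff.mp ho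
  -- 3 ∣ σ and σ odd
  have h3 : 3 ∣ σ 1 N := by
    have h9 : (9:ℕ) ∣ 5 * σ 1 N := hfriend ▸ ⟨N, rfl⟩
    have := (Nat.Coprime.dvd_of_dvd_mul_left (show Nat.Coprime 9 5 by norm_num) h9)
    omega
  have hSodd : σ 1 N % 2 = 1 := by omega
  -- factorization
  have hfac : σ 1 N = ∏ p ∈ N.primeFactors, ∑ k ∈ Finset.range (N.factorization p + 1), p ^ k := by
    rw [sigma_one_apply]; exact Nat.sum_divisors hN0
  obtain ⟨p, hpmem, hpdvd⟩ := (Nat.prime_iff.mp (by norm_num : Nat.Prime 3)).exists_mem_finset_dvd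
    (hfac ▸ h3)
  obtain ⟨hpp, hpN, -⟩ := Nat.mem_primeFactors.mp hpmem
  set a := N.factorization p with ha
  -- factor is odd
  have hfodd : (∑ k ∈ Finset.range (a + 1), p ^ k) % 2 = 1 := by
    by_contra h
    have h2 : 2 ∣ ∑ k ∈ Finset.range (a + 1), p ^ k := by omega
    have : 2 ∣ σ 1 N := hfac ▸ h2.trans (Finset.dvd_prod_of_mem _ hpmem)
    omega
  -- p odd
  have hpodd : p % 2 = 1 := by
    have := hpp.two_le
    rcases Nat.even_or_odd p with he | ho
    · exfalso
      have : (2:ℕ) ∣ N := dvd_trans he.two_dvd hpN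
      omega
    · exact Nat.odd_iff.mp ho
  -- a even
  have haeven : a % 2 = 0 := by
    have : (∑ k ∈ Finset.range (a + 1), p ^ k) % 2 = (a+1) % 2 := by
      rw [Finset.sum_nat_mod]
      have : ∀ k ∈ Finset.range (a+1), p ^ k % 2 = 1 % 2 := by
        intro k _
        rw [Nat.pow_mod, hpodd, one_pow]
      rw [Finset.sum_congr rfl this, ← Finset.sum_nat_mod, Finset.sum_const, card_range,
        smul_eq_mul, mul_one]
    omega
  -- rule out p % 3 = 0 and p % 3 = 2
  refine ⟨p, hpp, hpN, ?_⟩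
  have hp3 : p % 3 = 1 := by
    have h03 : p % 3 = 0 ∨ p % 3 = 1 ∨ p % 3 = 2 := by omega
    rcases h03 with h | h | h
    · exfalso
      have : p = 3 := (Nat.Prime.eq_one_or_self_of_dvd hpp 3 ?_).resolve_left (by norm_num) |>.symm
      · subst this
        have := geom3' a
        omega
      · omega
    · exact h
    · exfalso
      obtain ⟨b, hb⟩ : ∃ b, a = 2*b := ⟨a/2, by omega⟩
      have := geom3 p h b
      rw [hb] at hpdvd
      omega
  omega
end

section
/- Let p and q be distinct primes, let k be a positive integer such that p^(k−1) exactly divides q − 1 (i.e. p^(k−1) divides q − 1 but p^k does not), and let a be a positive integer. Then p divides σ(q^(2a)) if and only if there exists an odd integer f > 1 with q^f ≡ 1 (mod p^k) and the smallest such f divides 2a + 1. -/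
/-!
Let `o` be the order of `q` modulo `p^k`, so that `q^f ≡ 1 [MOD p^k]` iff `o ∣ f`; the right-hand
side just says `o ∣ 2a + 1`, and `σ(q^(2a)) = 1 + q + ⋯ + q^(2a)`. If `k = 1`, then `q ≢ 1 (mod p)`
and the geometric sum vanishes mod `p` iff `q^(2a+1) ≡ 1 (mod p)`. If `k ≥ 2`, then `q ≡ 1 (mod p)`,
so the sum is `≡ 2a + 1 (mod p)`, while `q^p - 1 = (q - 1)(1 + q + ⋯ + q^(p-1))` gains exactly one
more factor of `p` than `q - 1`, so `o = p`.
-/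

open Finset

theorem ZMod.natCast_eq_one_iff_dvd_sub_one {n q : ℕ} (hq : 1 ≤ q) :
    (q : ZMod n) = 1 ↔ n ∣ q - 1 := by
  rw [← ZMod.natCast_eq_zero_iff, Nat.cast_sub hq, Nat.cast_one, sub_eq_zero]

theorem natCast_pow_succ_dvd_pow_sub_one {R : Type*} [CommRing R] {x : R} {n m : ℕ}
    (h : (n : R) ^ (m + 1) ∣ x - 1) : (n : R) ^ (m + 2) ∣ x ^ n - 1 := by
  have hn : (n : R) ∣ x - 1 := (dvd_pow_self _ m.succ_ne_zero).trans h
  have hsum : (n : R) ∣ ∑ i ∈ range n, x ^ i := by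
    have hsplit : ∑ i ∈ range n, x ^ i = ∑ i ∈ range n, (x ^ i - 1) + n := by
      simp [sum_sub_distrib]
    rw [hsplit]
    exact dvd_add (dvd_sum fun i _ ↦ hn.trans (sub_one_dvd_pow_sub_one x i)) dvd_rfl
  rw [← geom_sum_mul, pow_succ']
  exact mul_dvd_mul hsum h

theorem geom_sum_eq_zero_iff_pow_eq_one {K : Type*} [Field K] {x : K} (hx : x ≠ 1) (n : ℕ) :
    ∑ i ∈ range n, x ^ i = 0 ↔ x ^ n = 1 := by
  rw [geom_sum_eq hx, div_eq_zero_iff, sub_eq_zero, or_iff_left (sub_ne_zero.2 hx)]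

theorem exists_least_odd_pow_eq_one_dvd_iff {M : Type*} [Monoid M] {x : M} (hx : x ≠ 1)
    {n : ℕ} (hn : Odd n) :
    (∃ f : ℕ, Odd f ∧ 1 < f ∧ x ^ f = 1 ∧ (∀ g : ℕ, Odd g → 1 < g → x ^ g = 1 → f ≤ g) ∧
      f ∣ n) ↔ orderOf x ∣ n := by
  constructor
  · rintro ⟨f, -, -, hf, -, hfn⟩
    exact (orderOf_dvd_of_pow_eq_one hf).trans hfn
  · intro hon
    have hpos : 0 < orderOf x := Nat.pos_of_dvd_of_pos hon hn.pos
    have hne : orderOf x ≠ 1 := mt orderOf_eq_one_iff.1 hx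
    refine ⟨orderOf x, hn.of_dvd_nat hon, by omega, pow_orderOf_eq_one x, ?_, hon⟩
    exact fun g _ hg hxg ↦ Nat.le_of_dvd (by omega) (orderOf_dvd_of_pow_eq_one hxg)

theorem orderOf_natCast_zmod_eq_prime {p q m : ℕ} (hp : p.Prime) (hq : 1 ≤ q)
    (hdvd : p ^ (m + 1) ∣ q - 1) (hndvd : ¬ p ^ (m + 2) ∣ q - 1) :
    orderOf (q : ZMod (p ^ (m + 2))) = p := by
  have : Fact p.Prime := ⟨hp⟩
  have hcast : ((p : ZMod (p ^ (m + 2)))) ^ (m + 1) ∣ (q : ZMod (p ^ (m + 2))) - 1 := by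
    simpa [Nat.cast_sub hq] using Nat.cast_dvd_cast (α := ZMod (p ^ (m + 2))) hdvd
  have hpow := natCast_pow_succ_dvd_pow_sub_one hcast
  rw [← Nat.cast_pow, ZMod.natCast_self, zero_dvd_iff, sub_eq_zero] at hpow
  exact orderOf_eq_prime hpow (mt (ZMod.natCast_eq_one_iff_dvd_sub_one hq).1 hndvd)

theorem prime_dvd_geom_sum_iff_orderOf_dvd {p q k : ℕ} (hp : p.Prime)
    (hdvd : p ^ (k - 1) ∣ q - 1) (hndvd : ¬ p ^ k ∣ q - 1) (n : ℕ) :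
    p ∣ ∑ i ∈ range n, q ^ i ↔ orderOf (q : ZMod (p ^ k)) ∣ n := by
  have : Fact p.Prime := ⟨hp⟩
  have hq : 1 ≤ q := Nat.one_le_iff_ne_zero.2 fun h ↦ hndvd (by simp [h])
  rw [← ZMod.natCast_eq_zero_iff]
  push_cast
  match k with
  | 0 => simp at hndvd
  | 1 =>
    have hx : (q : ZMod p) ≠ 1 :=
      mt (ZMod.natCast_eq_one_iff_dvd_sub_one hq).1 (by simpa using hndvd)
    rw [geom_sum_eq_zero_iff_pow_eq_one hx, pow_one, orderOf_dvd_iff_pow_eq_one]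
  | m + 2 =>
    have hx : (q : ZMod p) = 1 :=
      (ZMod.natCast_eq_one_iff_dvd_sub_one hq).2 ((dvd_pow_self p m.succ_ne_zero).trans hdvd)
    rw [orderOf_natCast_zmod_eq_prime hp hq hdvd hndvd, hx]
    simp [ZMod.natCast_eq_zero_iff]

theorem prime_dvd_sigma_iff_general (p q k a : ℕ) (hp : p.Prime) (hq : q.Prime)
    (hdvd : p ^ (k - 1) ∣ q - 1) (hndvd : ¬ p ^ k ∣ q - 1) :
    p ∣ (ArithmeticFunction.sigma 1) (q ^ (2 * a)) ↔
      ∃ f : ℕ, Odd f ∧ 1 < f ∧ q ^ f ≡ 1 [MOD p ^ k] ∧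
        (∀ g : ℕ, Odd g → 1 < g → q ^ g ≡ 1 [MOD p ^ k] → f ≤ g) ∧
        f ∣ 2 * a + 1 := by
  have hx : (q : ZMod (p ^ k)) ≠ 1 :=
    mt (ZMod.natCast_eq_one_iff_dvd_sub_one hq.one_lt.le).1 hndvd
  simp_rw [← ZMod.natCast_eq_natCast_iff, Nat.cast_pow, Nat.cast_one]
  rw [exists_least_odd_pow_eq_one_dvd_iff hx (odd_two_mul_add_one a),
    ArithmeticFunction.sigma_one_apply_prime_pow hq]
  exact prime_dvd_geom_sum_iff_orderOf_dvd hp hdvd hndvd _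

/-- Let `p, q` be distinct primes with `p^(k-1) || q - 1` (`k ≥ 1`), and let `a ≥ 1`.
Then `p ∣ σ(q^(2a))` iff there is an odd `f > 1` with `q^f ≡ 1 [MOD p^k]` whose
smallest instance divides `2a + 1`. -/
theorem prime_dvd_sigma_iff (p q k a : ℕ) (hp : p.Prime) (hq : q.Prime) (hpq : p ≠ q)
    (hk : 0 < k) (hdvd : p ^ (k - 1) ∣ q - 1) (hndvd : ¬ p ^ k ∣ q - 1) (ha : 0 < a) :
    p ∣ (ArithmeticFunction.sigma 1) (q ^ (2 * a)) ↔
      ∃ f : ℕ, Odd f ∧ 1 < f ∧ q ^ f ≡ 1 [MOD p ^ k] ∧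
        (∀ g : ℕ, Odd g → 1 < g → q ^ g ≡ 1 [MOD p ^ k] → f ≤ g) ∧
        f ∣ 2 * a + 1 :=
  prime_dvd_sigma_iff_general p q k a hp hq hdvd hndvd
end

section
/- Let p, p* and q be three distinct primes, let k and k* be positive integers with p^(k−1) || (q − 1) and (p*)^(k*−1) || (q − 1), and let a and a* be positive integers such that p divides σ(q^(2a)) and p* divides σ(q^(2a*)). Let f be the smallest odd integer greater than 1 with q^f ≡ 1 (mod p^k), and let f* be the smallest odd integer greater than 1 with q^(f*) ≡ 1 (mod (p*)^(k*)). If f* divides f, then the product p·p* divides σ(q^(2a)). -/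
/-!
Since `σ(q^n) (q - 1) = q^(n+1) - 1` and `p^(k-1) ∥ q - 1`, the prime `p` divides `σ(q^n)`
exactly when `q^(n+1) ≡ 1 (mod p^k)`. If this holds for an odd exponent `N = n + 1`, the
order of `q` modulo `p^k` divides `N`, so it is odd, and it is not `1` because
`p^k ∤ q - 1`; by minimality it equals `f`. Hence `p ∣ σ(q^(2a))` gives `f* ∣ f ∣ 2a + 1`, so
`q^(2a+1) ≡ 1 (mod p*^(k*))` and `p* ∣ σ(q^(2a))` as well.
-/

open ArithmeticFunction

theorem Nat.Prime.sigma_one_pow_mul_sub_one {q : ℕ} (hq : q.Prime) (n : ℕ) :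
    sigma 1 (q ^ n) * (q - 1) = q ^ (n + 1) - 1 := by
  rw [sigma_one_apply_prime_pow hq]
  exact geom_sum_mul_of_one_le hq.one_le _

theorem Nat.Prime.dvd_iff_pow_dvd_mul {p k x y : ℕ} (hp : p.Prime)
    (hdvd : p ^ (k - 1) ∣ x) (hndvd : ¬ p ^ k ∣ x) :
    p ∣ y ↔ p ^ k ∣ x * y := by
  have hk : k ≠ 0 := by
    rintro rfl
    exact hndvd (one_dvd x)
  obtain ⟨m, rfl⟩ := hdvd
  have hpk : p ^ k = p ^ (k - 1) * p := (pow_sub_one_mul hk p).symm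
  have hpm : ¬ p ∣ m := fun h ↦ hndvd (hpk ▸ mul_dvd_mul_left _ h)
  rw [hpk, mul_assoc, Nat.mul_dvd_mul_iff_left (pow_pos hp.pos _), hp.dvd_mul, or_iff_right hpm]

theorem prime_dvd_sigma_one_pow_iff {p q k : ℕ} (hp : p.Prime) (hq : q.Prime)
    (hdvd : p ^ (k - 1) ∣ q - 1) (hndvd : ¬ p ^ k ∣ q - 1) (n : ℕ) :
    p ∣ sigma 1 (q ^ n) ↔ q ^ (n + 1) ≡ 1 [MOD p ^ k] := by
  rw [hp.dvd_iff_pow_dvd_mul hdvd hndvd, mul_comm, hq.sigma_one_pow_mul_sub_one,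
    Nat.ModEq.comm, Nat.modEq_iff_dvd' (Nat.one_le_pow _ _ hq.pos)]

theorem dvd_of_odd_of_pow_eq_one {M : Type*} [Monoid M] {x : M} (hx : x ≠ 1)
    {f N : ℕ} (hf₀ : f ≠ 0) (hf : x ^ f = 1)
    (hmin : ∀ g : ℕ, Odd g → 1 < g → x ^ g = 1 → f ≤ g)
    (hN : Odd N) (hxN : x ^ N = 1) : f ∣ N := by
  have hdN : orderOf x ∣ N := orderOf_dvd_of_pow_eq_one hxN
  have hdf : orderOf x ∣ f := orderOf_dvd_of_pow_eq_one hf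
  have hodd : Odd (orderOf x) := hN.of_dvd_nat hdN
  have hone : 1 < orderOf x :=
    Nat.one_lt_iff_ne_zero_and_ne_one.2 ⟨hodd.pos.ne', fun h ↦ hx (orderOf_eq_one_iff.1 h)⟩
  have : f = orderOf x :=
    le_antisymm (hmin _ hodd hone (pow_orderOf_eq_one x)) (Nat.le_of_dvd (by omega) hdf)
  exact this ▸ hdN

theorem Nat.dvd_of_odd_of_pow_modEq_one {m q f N : ℕ} (hq : ¬ q ≡ 1 [MOD m])
    (hf₀ : f ≠ 0) (hf : q ^ f ≡ 1 [MOD m])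
    (hmin : ∀ g : ℕ, Odd g → 1 < g → q ^ g ≡ 1 [MOD m] → f ≤ g)
    (hN : Odd N) (hqN : q ^ N ≡ 1 [MOD m]) : f ∣ N := by
  have hcast : ∀ e : ℕ, q ^ e ≡ 1 [MOD m] ↔ (q : ZMod m) ^ e = 1 := fun e ↦ by
    rw [← ZMod.natCast_eq_natCast_iff]; push_cast; rfl
  refine dvd_of_odd_of_pow_eq_one (x := (q : ZMod m)) ?_ hf₀ ((hcast f).1 hf)
    (fun g hg hg1 hqg ↦ hmin g hg hg1 ((hcast g).2 hqg)) hN ((hcast N).1 hqN)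
  rwa [Ne, ← pow_one (q : ZMod m), ← hcast, pow_one]

theorem mul_prime_dvd_sigma_general (p p' q k k' a f f' : ℕ)
    (hp : p.Prime) (hp' : p'.Prime) (hq : q.Prime)
    (hpp' : p ≠ p')
    (hdvd : p ^ (k - 1) ∣ q - 1) (hndvd : ¬ p ^ k ∣ q - 1)
    (hdvd' : p' ^ (k' - 1) ∣ q - 1) (hndvd' : ¬ p' ^ k' ∣ q - 1)
    (hps : p ∣ (ArithmeticFunction.sigma 1) (q ^ (2 * a)))
    (hf : Odd f ∧ 1 < f ∧ q ^ f ≡ 1 [MOD p ^ k] ∧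
      ∀ g : ℕ, Odd g → 1 < g → q ^ g ≡ 1 [MOD p ^ k] → f ≤ g)
    (hf' : Odd f' ∧ 1 < f' ∧ q ^ f' ≡ 1 [MOD p' ^ k'] ∧
      ∀ g : ℕ, Odd g → 1 < g → q ^ g ≡ 1 [MOD p' ^ k'] → f' ≤ g)
    (hff' : f' ∣ f) :
    p * p' ∣ (ArithmeticFunction.sigma 1) (q ^ (2 * a)) := by
  obtain ⟨hfo, -, hfq, hmin⟩ := hf
  obtain ⟨-, -, hf'q, -⟩ := hf'
  have hq1 : ¬ q ≡ 1 [MOD p ^ k] := by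
    rwa [Nat.ModEq.comm, Nat.modEq_iff_dvd' hq.one_le]
  have hfN : f ∣ 2 * a + 1 := Nat.dvd_of_odd_of_pow_modEq_one hq1 hfo.pos.ne' hfq
    hmin (odd_two_mul_add_one a) ((prime_dvd_sigma_one_pow_iff hp hq hdvd hndvd _).1 hps)
  obtain ⟨c, hc⟩ := hff'.trans hfN
  have hq' : q ^ (2 * a + 1) ≡ 1 [MOD p' ^ k'] := by
    simpa [hc, pow_mul] using hf'q.pow c
  exact Nat.Coprime.mul_dvd_of_dvd_of_dvd ((Nat.coprime_primes hp hp').2 hpp') hps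
    ((prime_dvd_sigma_one_pow_iff hp' hq hdvd' hndvd' _).2 hq')

/-- Let `p, p*, q` be three distinct primes with `p^(k-1) || q-1` and `p*^(k*-1) || q-1`,
and suppose `p ∣ σ(q^(2a))`, `p* ∣ σ(q^(2a*))`. If `f*` (the smallest odd integer `> 1`
with `q^(f*) ≡ 1 [MOD p*^(k*)]`) divides `f` (the smallest odd integer `> 1` with
`q^f ≡ 1 [MOD p^k]`), then `p·p* ∣ σ(q^(2a))`. -/
theorem mul_prime_dvd_sigma (p p' q k k' a a' f f' : ℕ)
    (hp : p.Prime) (hp' : p'.Prime) (hq : q.Prime)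
    (hpp' : p ≠ p') (hpq : p ≠ q) (hp'q : p' ≠ q)
    (hk : 0 < k) (hk' : 0 < k')
    (hdvd : p ^ (k - 1) ∣ q - 1) (hndvd : ¬ p ^ k ∣ q - 1)
    (hdvd' : p' ^ (k' - 1) ∣ q - 1) (hndvd' : ¬ p' ^ k' ∣ q - 1)
    (ha : 0 < a) (ha' : 0 < a')
    (hps : p ∣ (ArithmeticFunction.sigma 1) (q ^ (2 * a)))
    (hps' : p' ∣ (ArithmeticFunction.sigma 1) (q ^ (2 * a')))
    (hf : Odd f ∧ 1 < f ∧ q ^ f ≡ 1 [MOD p ^ k] ∧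
      ∀ g : ℕ, Odd g → 1 < g → q ^ g ≡ 1 [MOD p ^ k] → f ≤ g)
    (hf' : Odd f' ∧ 1 < f' ∧ q ^ f' ≡ 1 [MOD p' ^ k'] ∧
      ∀ g : ℕ, Odd g → 1 < g → q ^ g ≡ 1 [MOD p' ^ k'] → f' ≤ g)
    (hff' : f' ∣ f) :
    p * p' ∣ (ArithmeticFunction.sigma 1) (q ^ (2 * a)) :=
  mul_prime_dvd_sigma_general p p' q k k' a f f' hp hp' hq hpp' hdvd hndvd hdvd' hndvd' hps hf hf'
    hff'
end

section
/- Let N be a friend of 10 and let a be a positive integer with 5^(2a) || N (i.e. 5^(2a) divides N but 5^(2a+1) does not). Then there exist a prime p dividing N and an odd integer f with 1 < f ≤ min{2a+1, p−1} such that f divides 2a+1, 5^f ≡ 1 (mod p), and f is the smallest odd integer greater than 1 satisfying 5^f ≡ 1 (mod p). -/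
/-!
Let `S = σ(5^(2a)) = 1 + 5 + ⋯ + 5^(2a)`, so `4S + 1 = 5^(2a+1)`. Since `5^(2a+1) ≡ 5 (mod 24)`,
`S ≡ 1 (mod 6)`, and `S > 1` because `a > 0`. As `5^(2a) ∥ N`, multiplicativity gives
`S ∣ σ(N)`, and `5σ(N) = 9N`; so any prime `p ∣ S` is prime to `6` and hence divides `N`.
Then `5^(2a+1) ≡ 1 (mod p)` while `5 ≢ 1 (mod p)` (as `p ∤ 4`), and `f` is the order of `5`
modulo `p`: it divides the odd number `2a+1` and `p - 1`, and differs from `1`.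
-/

open ArithmeticFunction
open scoped ArithmeticFunction.sigma

theorem ArithmeticFunction.IsMultiplicative.map_dvd_of_coprime_div {f : ArithmeticFunction ℕ}
    (hf : f.IsMultiplicative) {d n : ℕ} (hd : d ∣ n) (hcop : d.Coprime (n / d)) : f d ∣ f n := by
  conv_rhs => rw [← Nat.mul_div_cancel' hd, hf.map_mul_of_coprime hcop]
  exact dvd_mul_right _ _

theorem Nat.coprime_div_pow_of_not_pow_succ_dvd {p k n : ℕ} (hp : p.Prime) (hdvd : p ^ k ∣ n)
    (hndvd : ¬ p ^ (k + 1) ∣ n) : (p ^ k).Coprime (n / p ^ k) := by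
  refine Nat.Coprime.pow_left _ ((hp.coprime_iff_not_dvd).mpr fun h => hndvd ?_)
  rw [← Nat.mul_div_cancel' hdvd, pow_succ]
  exact mul_dvd_mul_left _ h

theorem ArithmeticFunction.sigma_one_prime_pow_mul_sub_one_add_one {p : ℕ} (hp : p.Prime)
    (k : ℕ) : σ 1 (p ^ k) * (p - 1) + 1 = p ^ (k + 1) := by
  obtain ⟨q, rfl⟩ : ∃ q, p = q + 1 := ⟨p - 1, by have := hp.one_lt; omega⟩
  rw [sigma_one_apply_prime_pow hp, Nat.add_sub_cancel, geom_sum_mul_add]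

theorem ArithmeticFunction.sigma_one_five_pow_even_mod_six (a : ℕ) :
    σ 1 (5 ^ (2 * a)) % 6 = 1 := by
  have hgeom := sigma_one_prime_pow_mul_sub_one_add_one Nat.prime_five (2 * a)
  have h25 : 5 ^ (2 * a + 1) % 24 = 5 := by
    -- `25 ≡ 1 (mod 24)`
    rw [pow_succ, pow_mul, Nat.mul_mod, Nat.pow_mod]
    norm_num
  omega

theorem ZMod.natCast_pow_eq_one_iff_modEq {p b g : ℕ} :
    (b : ZMod p) ^ g = 1 ↔ b ^ g ≡ 1 [MOD p] := by
  rw [← ZMod.natCast_eq_natCast_iff]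
  push_cast
  rfl

theorem Nat.exists_least_odd_exponent_pow_modEq_one {p b n : ℕ} (hp : p.Prime) (hn : Odd n)
    (hbn : b ^ n ≡ 1 [MOD p]) (hb1 : ¬ b ≡ 1 [MOD p]) :
    ∃ f, Odd f ∧ 1 < f ∧ f ≤ min n (p - 1) ∧ f ∣ n ∧ b ^ f ≡ 1 [MOD p] ∧
      ∀ g, Odd g → 1 < g → b ^ g ≡ 1 [MOD p] → f ≤ g := by
  have : Fact p.Prime := ⟨hp⟩
  rw [← ZMod.natCast_pow_eq_one_iff_modEq] at hbn
  have hfn : orderOf (b : ZMod p) ∣ n := orderOf_dvd_of_pow_eq_one hbn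
  have hf1 : orderOf (b : ZMod p) ≠ 1 := fun h => hb1 <|
    (ZMod.natCast_eq_natCast_iff _ _ _).mp (by rw [orderOf_eq_one_iff.mp h, Nat.cast_one])
  have hfp : orderOf (b : ZMod p) ∣ p - 1 :=
    ZMod.orderOf_dvd_card_sub_one fun h0 => by simp [h0, hn.pos.ne'] at hbn
  have hf0 : 0 < orderOf (b : ZMod p) := Nat.pos_of_dvd_of_pos hfn hn.pos
  refine ⟨_, hn.of_dvd_nat hfn, by omega, le_min (Nat.le_of_dvd hn.pos hfn)
    (Nat.le_of_dvd (by have := hp.two_le; omega) hfp), hfn,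
    ZMod.natCast_pow_eq_one_iff_modEq.mp (pow_orderOf_eq_one _), fun g _ hg1 hg => ?_⟩
  exact orderOf_le_of_pow_eq_one (by omega) (ZMod.natCast_pow_eq_one_iff_modEq.mpr hg)

theorem friend_of_ten_exists_prime_and_f_general (N a : ℕ)
    (hfriend : 5 * (ArithmeticFunction.sigma 1) N = 9 * N) (ha : 0 < a)
    (hdvd : 5 ^ (2 * a) ∣ N) (hndvd : ¬ 5 ^ (2 * a + 1) ∣ N) :
    ∃ p f : ℕ, p.Prime ∧ p ∣ N ∧ Odd f ∧ 1 < f ∧ f ≤ min (2 * a + 1) (p - 1) ∧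
      f ∣ 2 * a + 1 ∧ 5 ^ f ≡ 1 [MOD p] ∧
      (∀ g : ℕ, Odd g → 1 < g → 5 ^ g ≡ 1 [MOD p] → f ≤ g) := by
  set S := σ 1 (5 ^ (2 * a))
  have hgeom : S * (5 - 1) + 1 = 5 ^ (2 * a + 1) :=
    sigma_one_prime_pow_mul_sub_one_add_one Nat.prime_five _
  have hS6 : S.Coprime 6 := by
    rw [Nat.Coprime, Nat.gcd_comm, Nat.gcd_rec, sigma_one_five_pow_even_mod_six, Nat.gcd_one_left]
  have hS1 : S ≠ 1 := by
    have : 5 ^ 3 ≤ 5 ^ (2 * a + 1) := Nat.pow_le_pow_right (by norm_num) (by omega)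
    omega
  obtain ⟨p, hp, hpS⟩ := Nat.exists_prime_and_dvd hS1
  have hp6 : p.Coprime 6 := Nat.Coprime.coprime_dvd_left hpS hS6
  have hpN : p ∣ N := by
    have hSN : S ∣ σ 1 N := isMultiplicative_sigma.map_dvd_of_coprime_div hdvd
      (Nat.coprime_div_pow_of_not_pow_succ_dvd Nat.prime_five hdvd hndvd)
    have hp9 : p.Coprime 9 := (hp6.coprime_dvd_right (by norm_num : 3 ∣ 6)).pow_right 2
    refine hp9.dvd_of_dvd_mul_left ?_
    rw [← hfriend]
    exact (hpS.trans hSN).mul_left 5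
  have h5pow : 5 ^ (2 * a + 1) ≡ 1 [MOD p] := by
    rw [← hgeom]
    simpa using ((Nat.modEq_zero_iff_dvd.mpr (hpS.mul_right (5 - 1))).add_right 1)
  have h5 : ¬ 5 ≡ 1 [MOD p] := fun h =>
    hp.ne_one ((hp6.coprime_dvd_right (by norm_num : 2 ∣ 6)).pow_right 2 |>.eq_one_of_dvd
      ((Nat.modEq_iff_dvd' (by norm_num)).mp h.symm))
  obtain ⟨f, hf⟩ := Nat.exists_least_odd_exponent_pow_modEq_one hp ⟨a, rfl⟩ h5pow h5
  exact ⟨p, f, hp, hpN, hf⟩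

/-- Let `N` be a friend of 10 with `5^(2a) || N`, `a ≥ 1`. Then there exist a prime
factor `p` of `N` and an odd `f` with `1 < f ≤ min (2a+1) (p-1)` such that
`f ∣ 2a+1`, `5^f ≡ 1 [MOD p]`, and `f` is the smallest odd integer `> 1` with
`5^f ≡ 1 [MOD p]`. -/
theorem friend_of_ten_exists_prime_and_f (N a : ℕ) (hN : 10 < N)
    (hfriend : 5 * (ArithmeticFunction.sigma 1) N = 9 * N) (ha : 0 < a)
    (hdvd : 5 ^ (2 * a) ∣ N) (hndvd : ¬ 5 ^ (2 * a + 1) ∣ N) :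
    ∃ p f : ℕ, p.Prime ∧ p ∣ N ∧ Odd f ∧ 1 < f ∧ f ≤ min (2 * a + 1) (p - 1) ∧
      f ∣ 2 * a + 1 ∧ 5 ^ f ≡ 1 [MOD p] ∧
      (∀ g : ℕ, Odd g → 1 < g → 5 ^ g ≡ 1 [MOD p] → f ≤ g) :=
  friend_of_ten_exists_prime_and_f_general N a hfriend ha hdvd hndvd
end

section
/- Let N be a friend of 10 and let k ≥ 0 be an integer such that the Fermat number F_k = 2^(2^k) + 1 is prime and F_k divides N. Then there exists a prime p dividing N with p ≡ 1 (mod 2·F_k). -/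
/-!
A friend `N` of 10 is odd (a proper multiple of 10 is more abundant than 10), hence
`σ(N) = 9N/5` is odd, which for odd `N` forces every exponent in `N` to be even. So `F_k² ∣ N`,
and `5 σ(N) = 9N` gives `F_k ∣ σ(N) = ∏ σ(q^e)`, i.e. `F_k ∣ 1 + q + ⋯ + q^e` for some prime
power `q^e ∥ N` with `e` even. Modulo `F_k` this says `q^(e+1) = 1` with `q ≠ 0`; as `e + 1` is
odd and `F_k - 1 = 2^(2^k)`, also `q^(F_k - 1) = 1`, whence `q ≡ 1 (mod F_k)`, and `q` is odd.
-/

open ArithmeticFunction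
open scoped ArithmeticFunction.sigma

lemma nine_mul_lt_five_mul_sigma_one_of_ten_dvd {N : ℕ} (h10 : 10 ∣ N) (hN : 10 < N) :
    9 * N < 5 * σ 1 N := by
  obtain ⟨t, rfl⟩ := h10
  have ht : 2 ≤ t := by omega
  have hsub : ({1, t, 2 * t, 5 * t, 10 * t} : Finset ℕ) ⊆ (10 * t).divisors := by
    intro d hd
    simp only [Finset.mem_insert, Finset.mem_singleton] at hd
    rw [Nat.mem_divisors]
    refine ⟨?_, by omega⟩
    rcases hd with rfl | rfl | rfl | rfl | rfl
    exacts [one_dvd _, ⟨10, by ring⟩, ⟨5, by ring⟩, ⟨2, by ring⟩, dvd_rfl]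
  have hsum : ∑ d ∈ ({1, t, 2 * t, 5 * t, 10 * t} : Finset ℕ), d = 18 * t + 1 := by
    rw [Finset.sum_insert (by simp; omega), Finset.sum_insert (by simp; omega),
      Finset.sum_insert (by simp; omega), Finset.sum_insert (by simp; omega),
      Finset.sum_singleton]
    ring
  have hle : 18 * t + 1 ≤ σ 1 (10 * t) := by
    rw [sigma_one_apply, ← hsum]
    exact Finset.sum_le_sum_of_subset hsub
  omega

lemma odd_of_five_mul_sigma_one_eq {N : ℕ} (hN : 10 < N) (hfriend : 5 * σ 1 N = 9 * N) :
    Odd N := by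
  refine Nat.odd_iff.2 (Nat.two_dvd_ne_zero.1 fun h2 => ?_)
  have h5 : 5 ∣ N := Nat.Coprime.dvd_of_dvd_mul_left (by norm_num) ⟨σ 1 N, hfriend.symm⟩
  have h10 : 10 ∣ N := Nat.Coprime.mul_dvd_of_dvd_of_dvd (by norm_num) h2 h5
  have := nine_mul_lt_five_mul_sigma_one_of_ten_dvd h10 hN
  omega

lemma odd_sigma_one_prime_pow_iff {p e : ℕ} (hp : p.Prime) (hodd : Odd p) :
    Odd (σ 1 (p ^ e)) ↔ Even e := by
  rw [sigma_one_apply_prime_pow hp, Finset.odd_sum_iff_odd_card_odd]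
  have hall : ({i ∈ Finset.range (e + 1) | Odd (p ^ i)}) = Finset.range (e + 1) :=
    Finset.filter_true_of_mem fun i _ => hodd.pow
  rw [hall, Finset.card_range, Nat.odd_add_one, Nat.not_odd_iff_even]

lemma ArithmeticFunction.IsMultiplicative.map_ordProj_dvd {R : Type*} [CommMonoidWithZero R]
    {f : ArithmeticFunction R} (hf : f.IsMultiplicative) {p : ℕ} (hp : p.Prime) {N : ℕ}
    (hN : N ≠ 0) : f (p ^ N.factorization p) ∣ f N := by
  conv_rhs => rw [← Nat.ordProj_mul_ordCompl_eq_self N p]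
  rw [hf.map_mul_of_coprime ((Nat.coprime_ordCompl hp hN).pow_left _)]
  exact dvd_mul_right _ _

lemma ArithmeticFunction.IsMultiplicative.exists_mem_primeFactors_dvd_map_ordProj {R : Type*}
    [CommMonoidWithZero R] {f : ArithmeticFunction R} (hf : f.IsMultiplicative) {N : ℕ}
    (hN : N ≠ 0) {π : R} (hπ : Prime π) (h : π ∣ f N) :
    ∃ q ∈ N.primeFactors, π ∣ f (q ^ N.factorization q) := by
  rw [hf.multiplicative_factorization f hN, Finsupp.prod, Nat.support_factorization] at h
  exact (hπ.dvd_finsetProd_iff _).1 h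

lemma even_factorization_of_odd_sigma_one {N : ℕ} (hN : Odd N) (hσ : Odd (σ 1 N)) (p : ℕ) :
    Even (N.factorization p) := by
  by_cases hp : p ∈ N.primeFactors
  · have hpp := Nat.prime_of_mem_primeFactors hp
    refine (odd_sigma_one_prime_pow_iff hpp (hN.of_dvd_nat (Nat.dvd_of_mem_primeFactors hp))).1 ?_
    exact hσ.of_dvd_nat (isMultiplicative_sigma.map_ordProj_dvd hpp hN.pos.ne')
  · rw [Finsupp.notMem_support_iff.1 (by rwa [Nat.support_factorization])]
    exact .zero

lemma Nat.Prime.sq_dvd_of_even_factorization {p N : ℕ} (hp : p.Prime) (hN : N ≠ 0) (h : p ∣ N)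
    (he : Even (N.factorization p)) : p ^ 2 ∣ N := by
  have hpos := hp.factorization_pos_of_dvd hN h
  obtain ⟨m, hm⟩ := he
  exact (hp.pow_dvd_iff_le_factorization hN).2 (by omega)

lemma Nat.Prime.dvd_of_sq_dvd_mul_of_squarefree {p a b : ℕ} (hp : p.Prime) (ha : Squarefree a)
    (h : p ^ 2 ∣ a * b) : p ∣ b := by
  by_contra hb
  have hcop : (p ^ 2).Coprime b := ((hp.coprime_iff_not_dvd).2 hb).pow_left 2
  exact hp.not_isUnit (ha p (sq p ▸ hcop.dvd_of_dvd_mul_right h))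

lemma FiniteField.eq_one_of_geom_sum_eq_zero {K : Type*} [Field K] [Fintype K] {x : K} {m : ℕ}
    (hm : m ≠ 0) (hcop : m.Coprime (Fintype.card K - 1))
    (hsum : ∑ i ∈ Finset.range m, x ^ i = 0) : x = 1 := by
  have hx : x ≠ 0 := by
    rintro rfl
    simp [zero_geom_sum, hm] at hsum
  have hxm : x ^ m = 1 := by
    rw [← sub_eq_zero, ← geom_sum_mul, hsum, zero_mul]
  simpa [hcop.gcd_eq_one] using
    pow_gcd_eq_one.2 ⟨hxm, FiniteField.pow_card_sub_one_eq_one x hx⟩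

lemma Nat.Prime.modEq_one_of_dvd_sigma_one_prime_pow {p q e : ℕ} (hp : p.Prime) (hq : q.Prime)
    (hcop : (e + 1).Coprime (p - 1)) (h : p ∣ σ 1 (q ^ e)) : q ≡ 1 [MOD p] := by
  have := Fact.mk hp
  have hsum : ∑ i ∈ Finset.range (e + 1), (q : ZMod p) ^ i = 0 := by
    rw [← (ZMod.natCast_eq_zero_iff _ _).2 h, sigma_one_apply_prime_pow hq]
    push_cast
    rfl
  have hq1 := FiniteField.eq_one_of_geom_sum_eq_zero e.succ_ne_zero
    (by rwa [ZMod.card]) hsum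
  exact (ZMod.natCast_eq_natCast_iff q 1 p).1 (by simpa using hq1)

/-- If `N` is a friend of 10 and a Fermat prime `F_k = 2^(2^k) + 1` divides `N`, then
`N` has a prime factor congruent to 1 modulo `2·F_k`. -/
theorem friend_of_ten_fermat_prime (N k : ℕ) (hN : 10 < N)
    (hfriend : 5 * (ArithmeticFunction.sigma 1) N = 9 * N)
    (hFk : Nat.Prime (2 ^ 2 ^ k + 1)) (hdvd : (2 ^ 2 ^ k + 1) ∣ N) :
    ∃ p : ℕ, p.Prime ∧ p ∣ N ∧ p % (2 * (2 ^ 2 ^ k + 1)) = 1 := by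
  set F := 2 ^ 2 ^ k + 1
  have hN0 : N ≠ 0 := by omega
  have hNodd : Odd N := odd_of_five_mul_sigma_one_eq hN hfriend
  have hσodd : Odd (σ 1 N) := (Nat.odd_mul.1 (hfriend ▸ (by decide : Odd 9).mul hNodd)).2
  have hsq := even_factorization_of_odd_sigma_one hNodd hσodd
  have hFσ : F ∣ σ 1 N := hFk.dvd_of_sq_dvd_mul_of_squarefree Nat.prime_five.prime.squarefree <|
    hfriend ▸ dvd_mul_of_dvd_right (hFk.sq_dvd_of_even_factorization hN0 hdvd (hsq F)) 9
  obtain ⟨q, hq, hFq⟩ :=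
    isMultiplicative_sigma.exists_mem_primeFactors_dvd_map_ordProj hN0 hFk.prime hFσ
  have hqp := Nat.prime_of_mem_primeFactors hq
  have hqN := Nat.dvd_of_mem_primeFactors hq
  have hqF : q ≡ 1 [MOD F] := hFk.modEq_one_of_dvd_sigma_one_prime_pow hqp
    (by simpa [F] using (Nat.coprime_two_right.2 (hsq q).add_one).pow_right (2 ^ k)) hFq
  have hq2 : q ≡ 1 [MOD 2] := Nat.odd_iff.1 (hNodd.of_dvd_nat hqN)
  have hFodd : Odd F := (Nat.even_pow.2 ⟨even_two, by positivity⟩).add_one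
  have hq2F := (Nat.modEq_and_modEq_iff_modEq_mul (Nat.coprime_two_left.2 hFodd)).1 ⟨hq2, hqF⟩
  refine ⟨q, hqp, hqN, Eq.trans hq2F (Nat.one_mod_eq_one.2 ?_)⟩
  have := hFk.two_le
  omega
end

section
/- If N = 5^(2a)·m² is a friend of 10, where a and m are positive integers with 5 not dividing m, then m is not squarefree. -/
open ArithmeticFunction Finset
open scoped ArithmeticFunction.sigma

lemma five_not_dvd_fac (p : ℕ) : ¬ (5 ∣ 1 + p + p ^ 2) := by
  intro h
  have : ((1 + p + p ^ 2 : ℕ) : ZMod 5) = 0 := by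
    exact_mod_cast (ZMod.natCast_eq_zero_iff _ _).2 h
  push_cast at this
  revert this
  have : ∀ x : ZMod 5, ¬ (1 + x + x ^ 2 = 0) := by decide
  exact this (p : ZMod 5)

lemma five_not_dvd_sigma_pow (a : ℕ) :
    ¬ 5 ∣ (σ 1) (5 ^ (2 * a)) := by
  rw [sigma_one_apply_prime_pow (by norm_num)]
  intro h
  have h0 : ((∑ k ∈ range (2 * a + 1), 5 ^ k : ℕ) : ZMod 5) = 0 := by
    exact_mod_cast (ZMod.natCast_eq_zero_iff _ _).2 h
  push_cast at h0
  rw [Finset.sum_range_succ'] at h0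
  simp [pow_succ, show ((5 : ZMod 5) = 0) from rfl] at h0
  exact absurd h0 (by decide)

/-- If `N = 5^(2a)·m²` is a friend of 10 with `a, m ≥ 1` and `5 ∤ m`, then `m` is
not squarefree. -/
theorem friend_of_ten_m_not_squarefree (N a m : ℕ) (ha : 0 < a) (hm : 0 < m)
    (h5m : ¬ 5 ∣ m) (hform : N = 5 ^ (2 * a) * m ^ 2) (hN : 10 < N)
    (hfriend : 5 * (ArithmeticFunction.sigma 1) N = 9 * N) :
    ¬ Squarefree m := by
  intro hsq
  have h5 : Nat.Prime 5 := by norm_num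
  have hcop : Nat.Coprime (5 ^ (2 * a)) (m ^ 2) :=
    Nat.Coprime.pow (2 * a) 2 ((Nat.Prime.coprime_iff_not_dvd h5).mpr h5m)
  -- split sigma
  have hmul : (σ 1) N = (σ 1) (5 ^ (2 * a)) * (σ 1) (m ^ 2) := by
    rw [hform]
    exact isMultiplicative_sigma.map_mul_of_coprime hcop
  -- 5 divides σ(m²)
  have hdvd : 5 ∣ (σ 1) (m ^ 2) := by
    have h25 : (25 : ℕ) ∣ 9 * N := by
      rw [hform]
      have h52 : (5 : ℕ) ^ 2 ∣ 5 ^ (2 * a) := pow_dvd_pow 5 (by omega)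
      norm_num at h52
      exact Dvd.dvd.mul_left (h52.mul_right (m ^ 2)) 9
    rw [← hfriend, hmul] at h25
    have : 5 ∣ (σ 1) (5 ^ (2 * a)) * (σ 1) (m ^ 2) := by omega
    rcases (Nat.Prime.dvd_mul h5).1 this with h | h
    · exact absurd h (five_not_dvd_sigma_pow a)
    · exact h
  -- but σ(m²) = ∏ (1 + p + p²) over prime factors of m
  have hfac : (σ 1) (m ^ 2) = ∏ p ∈ m.primeFactors, (1 + p + p ^ 2) := by
    rw [sigma_one_apply, Nat.sum_divisors (by positivity)]
    rw [Nat.primeFactors_pow m (by norm_num)]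
    apply Finset.prod_congr rfl
    intro p hp
    have hp' : Nat.Prime p := Nat.prime_of_mem_primeFactors hp
    have hfp : (m ^ 2).factorization p = 2 := by
      rw [Nat.factorization_pow]
      simp only [Finsupp.smul_apply, smul_eq_mul]
      have : m.factorization p = 1 :=
        Nat.factorization_eq_one_of_squarefree hsq hp' (Nat.dvd_of_mem_primeFactors hp)
          
      omega
    rw [hfp]
    rw [Finset.sum_range_succ, Finset.sum_range_succ, Finset.sum_range_one]
    ring
  rw [hfac] at hdvd
  rcases (Nat.Prime.prime h5).dvd_finset_prod_iff _ |>.1 hdvd with ⟨p, _, hpd⟩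
  exact five_not_dvd_fac p hpd
end

section
/- If N = 5^(2a)·m² is a friend of 10, where a and m are positive integers with 5 not dividing m, then Ω(N) ≥ 2·ω(N) + 6a − 4. -/
open ArithmeticFunction Finset
open scoped ArithmeticFunction.sigma ArithmeticFunction.Omega

private lemma growth_aux : ∀ e : ℕ, 1 ≤ e → 2 * e + 1 < 5 ^ e := by
  intro e he
  induction e with
  | zero => omega
  | succ k ih =>
    rcases Nat.eq_or_lt_of_le he with h | h
    · simp [← h]
    · have hk : 1 ≤ k := by omega
      have := ih hk
      have h5 : 5 ^ k ≥ 5 := by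
        calc (5:ℕ) = 5 ^ 1 := by norm_num
        _ ≤ 5 ^ k := Nat.pow_le_pow_right (by norm_num) hk
      calc 2 * (k + 1) + 1 = (2 * k + 1) + 2 := by ring
      _ < 5 ^ k + 2 := by omega
      _ ≤ 5 ^ k + 4 * 5 ^ k := by omega
      _ = 5 ^ (k + 1) := by ring

private lemma sigma_pp_pos (p k : ℕ) (hp : p.Prime) : 0 < σ 1 (p ^ k) := by
  rw [ArithmeticFunction.sigma_one_apply_prime_pow hp]
  exact Finset.sum_pos (fun i _ => pow_pos hp.pos i) ⟨0, by simp⟩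

private lemma geom_identity (p n : ℕ) (hp : 1 ≤ p) :
    (p - 1) * (∑ k ∈ Finset.range n, p ^ k) = p ^ n - 1 := by
  have h2 : 1 ≤ p ^ n := Nat.one_le_pow _ _ hp
  zify [hp, h2]
  linear_combination (geom_sum_mul (p : ℤ) n)

/-- Key local bound: for a prime `p ≠ 5` and `e ≥ 1`,
`v₅(σ(p^(2e))) ≤ e - 1`. -/
private lemma key_bound (p e : ℕ) (hp : p.Prime) (hp5 : p ≠ 5) (he : 0 < e) :
    (σ 1 (p ^ (2 * e))).factorization 5 ≤ e - 1 := by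
  haveI : Fact (Nat.Prime 5) := ⟨by norm_num⟩
  have h5p : ¬ (5 ∣ p) := by
    intro h
    rcases (Nat.Prime.eq_one_or_self_of_dvd hp 5 h) with h1 | h1 <;> omega
  have hx0 : (p : ZMod 5) ≠ 0 := by
    rwa [Ne, ZMod.natCast_eq_zero_iff]
  set n := 2 * e + 1 with hn
  have hs : σ 1 (p ^ (2 * e)) = ∑ k ∈ Finset.range n, p ^ k := by
    rw [ArithmeticFunction.sigma_one_apply_prime_pow hp]
  set s := σ 1 (p ^ (2 * e)) with hsdef
  have hspos : 0 < s := sigma_pp_pos p _ hp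
  by_cases hx1 : (p : ZMod 5) = 1
  · -- p ≡ 1 (mod 5): use lifting the exponent
    have h51 : (5 : ℕ) ∣ p - 1 := by
      have : ((p - 1 : ℕ) : ZMod 5) = 0 := by
        have hp1 : 1 ≤ p := hp.one_le
        push_cast [Nat.cast_sub hp1]
        rw [hx1]; ring
      rwa [ZMod.natCast_eq_zero_iff] at this
    have hp2 : 2 ≤ p := hp.two_le
    have hpm1 : 0 < p - 1 := by
      rcases h51 with ⟨c, hc⟩
      omega
    have hid : (p - 1) * s = p ^ n - 1 := by
      rw [hs]; exact geom_identity p n hp.one_le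
    have hpn : 1 < p ^ n := by
      calc 1 < p := hp.one_lt
      _ = p ^ 1 := (pow_one p).symm
      _ ≤ p ^ n := Nat.pow_le_pow_right hp.pos (by omega)
    -- LTE
    have hlte : emultiplicity 5 (p ^ n - 1 ^ n) =
        emultiplicity 5 (p - 1) + emultiplicity 5 n := by
      exact Nat.emultiplicity_pow_sub_pow (by norm_num) ⟨2, by norm_num⟩
        (by simpa using h51) h5p n
    have hv1 : (padicValNat 5 (p ^ n - 1) : ℕ∞) = emultiplicity 5 (p ^ n - 1) :=
      padicValNat_eq_emultiplicity (by omega)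
    have hv2 : (padicValNat 5 (p - 1) : ℕ∞) = emultiplicity 5 (p - 1) :=
      padicValNat_eq_emultiplicity hpm1.ne'
    have hv3 : (padicValNat 5 n : ℕ∞) = emultiplicity 5 n :=
      padicValNat_eq_emultiplicity (by omega)
    have hfin : padicValNat 5 (p ^ n - 1) = padicValNat 5 (p - 1) + padicValNat 5 n := by
      have : (padicValNat 5 (p ^ n - 1) : ℕ∞) =
          ((padicValNat 5 (p - 1) + padicValNat 5 n : ℕ) : ℕ∞) := by
        rw [hv1]
        simp only [one_pow] at hlte
        rw [hlte, ← hv2, ← hv3]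
        push_cast
        rfl
      exact_mod_cast this
    -- translate to factorization
    have p5 : Nat.Prime 5 := by norm_num
    have f1 : ((p - 1) * s).factorization 5 = (p - 1).factorization 5 + s.factorization 5 := by
      rw [Nat.factorization_mul (by omega) (by omega)]; rfl
    have f2 : (p ^ n - 1).factorization 5 = (p - 1).factorization 5 + n.factorization 5 := by
      rw [Nat.factorization_def _ p5, Nat.factorization_def _ p5, Nat.factorization_def _ p5]
      exact hfin
    have hseq : s.factorization 5 = n.factorization 5 := by
      rw [hid] at f1; omega
    -- bound v₅(n) ≤ e - 1
    have hdvd : 5 ^ (n.factorization 5) ∣ n := Nat.ordProj_dvd n 5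
    have hle : 5 ^ (n.factorization 5) ≤ n := Nat.le_of_dvd (by omega) hdvd
    by_contra hcon
    push_neg at hcon
    have hge : e ≤ n.factorization 5 := by omega
    have : 5 ^ e ≤ 5 ^ (n.factorization 5) := Nat.pow_le_pow_right (by norm_num) hge
    have := growth_aux e he
    omega
  · -- p ≢ 1 (mod 5): show 5 ∤ s
    have hnd : ¬ (5 ∣ s) := by
      intro hdvd
      have hs0 : ((s : ℕ) : ZMod 5) = 0 := by
        rwa [ZMod.natCast_eq_zero_iff]
      have hsum : ((s : ℕ) : ZMod 5) = ∑ k ∈ Finset.range n, (p : ZMod 5) ^ k := by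
        rw [hs]; push_cast; rfl
      have hgeom : ∑ k ∈ Finset.range n, (p : ZMod 5) ^ k =
          ((p : ZMod 5) ^ n - 1) / ((p : ZMod 5) - 1) := geom_sum_eq hx1 n
      have hne : (p : ZMod 5) - 1 ≠ 0 := sub_ne_zero.mpr hx1
      have hnum : (p : ZMod 5) ^ n - 1 = 0 := by
        have h0 : ((p : ZMod 5) ^ n - 1) / ((p : ZMod 5) - 1) = 0 := by
          rw [← hgeom, ← hsum, hs0]
        rcases div_eq_zero_iff.mp h0 with h | h
        · exact h
        · exact absurd h hne
      have hxn : (p : ZMod 5) ^ n = 1 := by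
        have := sub_eq_zero.mp hnum; exact this
      have hx4 : (p : ZMod 5) ^ 4 = 1 := by
        have := ZMod.pow_card_sub_one_eq_one hx0
        simpa using this
      have hd1 : orderOf (p : ZMod 5) ∣ n := orderOf_dvd_of_pow_eq_one hxn
      have hd2 : orderOf (p : ZMod 5) ∣ 4 := orderOf_dvd_of_pow_eq_one hx4
      have hgcd : Nat.gcd n 4 = 1 := by
        have hodd : Nat.Coprime n 2 := by
          rw [Nat.coprime_two_right]
          exact ⟨e, by omega⟩
        have : Nat.Coprime n 4 := by
          have := Nat.Coprime.pow_right 2 hodd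
          norm_num at this
          exact this
        exact this
      have : orderOf (p : ZMod 5) ∣ 1 := hgcd ▸ Nat.dvd_gcd hd1 hd2
      have : orderOf (p : ZMod 5) = 1 := Nat.dvd_one.mp this
      exact hx1 (orderOf_eq_one_iff.mp this)
    rw [Nat.factorization_eq_zero_of_not_dvd hnd]
    omega

private lemma cardFactors_finset_prod {S : Finset ℕ} {g : ℕ → ℕ}
    (h : ∀ x ∈ S, g x ≠ 0) :
    Ω (∏ x ∈ S, g x) = ∑ x ∈ S, Ω (g x) := by
  classical
  induction S using Finset.induction with
  | empty => simp
  | @insert x T hx ih =>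
    rw [Finset.prod_insert hx, Finset.sum_insert hx,
      cardFactors_mul (h x (Finset.mem_insert_self x T))
        (Finset.prod_ne_zero_iff.mpr fun y hy => h y (Finset.mem_insert_of_mem hy)),
      ih (fun y hy => h y (Finset.mem_insert_of_mem hy))]

/-- `Ω` of a product of prime powers. -/
private lemma omega_eq_sum (m : ℕ) (hm : m ≠ 0) :
    Ω m = ∑ p ∈ m.primeFactors, m.factorization p := by
  conv_lhs => rw [← Nat.factorization_prod_pow_eq_self hm, Finsupp.prod,
    Nat.support_factorization]
  rw [cardFactors_finset_prod (fun p hp =>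
    (pow_pos (Nat.prime_of_mem_primeFactors hp).pos _).ne')]
  exact Finset.sum_congr rfl fun p hp =>
    cardFactors_apply_prime_pow (Nat.prime_of_mem_primeFactors hp)

/-- If `N = 5^(2a)·m²` is a friend of 10 with `a, m ≥ 1` and `5 ∤ m`, then
`Ω(N) ≥ 2·ω(N) + 6a − 4`. -/
theorem friend_of_ten_bigOmega_bound (N a m : ℕ) (ha : 0 < a) (hm : 0 < m)
    (h5m : ¬ 5 ∣ m) (hform : N = 5 ^ (2 * a) * m ^ 2) (hN : 10 < N)
    (hfriend : 5 * (ArithmeticFunction.sigma 1) N = 9 * N) :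
    2 * N.primeFactors.card + 6 * a - 4 ≤ N.primeFactorsList.length := by
  haveI : Fact (Nat.Prime 5) := ⟨by norm_num⟩
  have p5 : Nat.Prime 5 := by norm_num
  have hm0 : m ≠ 0 := hm.ne'
  have hm2 : m ^ 2 ≠ 0 := pow_ne_zero _ hm0
  have h5a : (5:ℕ) ^ (2 * a) ≠ 0 := pow_ne_zero _ (by norm_num)
  have hN0 : N ≠ 0 := by omega
  have hcop5 : Nat.Coprime 5 m := (Nat.Prime.coprime_iff_not_dvd p5).mpr h5m
  have hcop : Nat.Coprime (5 ^ (2 * a)) (m ^ 2) := Nat.Coprime.pow _ _ hcop5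
  set P := m.primeFactors with hP
  set K := ∑ p ∈ P, m.factorization p with hK
  -- σ is multiplicative
  have hsig : σ 1 N = σ 1 (5 ^ (2 * a)) * σ 1 (m ^ 2) := by
    rw [hform]
    exact (ArithmeticFunction.isMultiplicative_sigma.map_mul_of_coprime hcop)
  have hsigA_pos : 0 < σ 1 (5 ^ (2 * a)) := sigma_pp_pos 5 _ p5
  have hsigB_pos : 0 < σ 1 (m ^ 2) := by
    have := hfriend
    rw [hsig] at this
    nlinarith [Nat.pos_of_ne_zero hN0]
  -- 5 ∤ σ(5^(2a))
  have hnd5 : ¬ (5 ∣ σ 1 (5 ^ (2 * a))) := by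
    rw [ArithmeticFunction.sigma_one_apply_prime_pow p5]
    rw [Finset.sum_range_succ' (fun k => (5:ℕ) ^ k)]
    intro hdvd
    have h1 : (5:ℕ) ∣ ∑ i ∈ Finset.range (2 * a), 5 ^ (i + 1) :=
      Finset.dvd_sum fun i _ => dvd_pow_self 5 (Nat.succ_ne_zero i)
    have : (5:ℕ) ∣ 5 ^ 0 := (Nat.dvd_add_right h1).mp hdvd
    simp at this
  -- v₅ of the friend equation
  have hv5N : N.factorization 5 = 2 * a := by
    rw [hform, Nat.factorization_mul h5a hm2, Finsupp.add_apply,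
      Nat.Prime.factorization_pow p5, Nat.factorization_pow]
    simp [Nat.factorization_eq_zero_of_not_dvd h5m]
  have hveq : 1 + (σ 1 (m ^ 2)).factorization 5 = 2 * a := by
    have hcong := congrArg (fun x => x.factorization 5) hfriend
    have hσN : (σ 1) N ≠ 0 := by rw [hsig]; positivity
    rw [Nat.factorization_mul (by norm_num) hσN,
      Nat.factorization_mul (by norm_num) hN0] at hcong
    simp only [Finsupp.add_apply] at hcong
    rw [hsig, Nat.factorization_mul hsigA_pos.ne' hsigB_pos.ne'] at hcong
    simp only [Finsupp.add_apply] at hcong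
    rw [Nat.factorization_eq_zero_of_not_dvd hnd5] at hcong
    have h9 : (9:ℕ).factorization 5 = 0 :=
      Nat.factorization_eq_zero_of_not_dvd (by norm_num)
    have h5 : (5:ℕ).factorization 5 = 1 := by
      simp [Nat.Prime.factorization p5]
    rw [h9, h5, hv5N] at hcong
    omega
  -- factor σ(m²) over primes of m
  have hmem : ∀ p ∈ P, p.Prime := fun p hp => Nat.prime_of_mem_primeFactors hp
  have hfac2 : ∀ p, (m ^ 2).factorization p = 2 * m.factorization p := by
    intro p
    rw [Nat.factorization_pow]
    rfl
  have hsigm : σ 1 (m ^ 2) = ∏ p ∈ P, σ 1 (p ^ (2 * m.factorization p)) := by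
    rw [ArithmeticFunction.isMultiplicative_sigma.multiplicative_factorization _ hm2,
      Finsupp.prod, Nat.support_factorization, Nat.primeFactors_pow m (by norm_num)]
    exact Finset.prod_congr rfl fun p hp => by rw [hfac2]
  -- v₅ of the product
  have hvprod : (σ 1 (m ^ 2)).factorization 5 =
      ∑ p ∈ P, (σ 1 (p ^ (2 * m.factorization p))).factorization 5 := by
    rw [hsigm, Nat.factorization_prod (fun p hp => (sigma_pp_pos p _ (hmem p hp)).ne')]
    simp [Finset.sum_apply']
  -- per-prime bound and summation
  have hbound : (σ 1 (m ^ 2)).factorization 5 ≤ ∑ p ∈ P, (m.factorization p - 1) := by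
    rw [hvprod]
    refine Finset.sum_le_sum fun p hp => ?_
    have hpp := hmem p hp
    have hppne5 : p ≠ 5 := by
      intro h
      exact h5m (h ▸ Nat.dvd_of_mem_primeFactors hp)
    have hfp : 0 < m.factorization p :=
      Nat.Prime.factorization_pos_of_dvd hpp hm0 (Nat.dvd_of_mem_primeFactors hp)
    exact key_bound p _ hpp hppne5 hfp
  have hfp1 : ∀ p ∈ P, 1 ≤ m.factorization p := fun p hp =>
    Nat.Prime.factorization_pos_of_dvd (hmem p hp) hm0 (Nat.dvd_of_mem_primeFactors hp)
  have hKsplit : K = P.card + ∑ p ∈ P, (m.factorization p - 1) := by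
    rw [hK, Finset.card_eq_sum_ones, ← Finset.sum_add_distrib]
    exact Finset.sum_congr rfl fun p hp => by have := hfp1 p hp; omega
  -- counts
  have hΩm : Ω m = K := omega_eq_sum m hm0
  have hΩN : (Ω N : ℕ) = 2 * a + 2 * K := by
    rw [hform, cardFactors_mul h5a hm2, cardFactors_apply_prime_pow p5, sq,
      cardFactors_mul hm0 hm0, hΩm]
    ring
  have hωN : N.primeFactors.card = 1 + P.card := by
    rw [hform, Nat.primeFactors_mul h5a hm2, Nat.primeFactors_prime_pow (by positivity) p5,
      Nat.primeFactors_pow m (by norm_num)]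
    rw [Finset.card_union_of_disjoint]
    · simp [hP]
    · simp only [Finset.disjoint_singleton_left]
      intro hmm
      exact h5m (Nat.dvd_of_mem_primeFactors hmm)
  have hlen : N.primeFactorsList.length = Ω N := (cardFactors_apply).symm
  rw [hlen, hΩN, hωN]
  have h1 : 2 * a - 1 ≤ ∑ p ∈ P, (m.factorization p - 1) := by omega
  omega
end

section
/- Let p and q be distinct primes with q ≥ 3 and let a be a positive integer. Write d = o_q(p) for the multiplicative order of p modulo q and v_q for the q-adic valuation. Then: if d divides a + 1 and d ≠ 1, v_q(σ(p^a)) = v_q(p^d − 1) + v_q(a + 1); if d = 1, v_q(σ(p^a)) = v_q(a + 1); and if d does not divide a + 1, v_q(σ(p^a)) = 0. -/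
/-- Let `p, q` be distinct primes with `q ≥ 3` and `a ≥ 1`, and let `d` be the
multiplicative order of `p` modulo `q`. Then `v_q(σ(p^a))` equals
`v_q(p^d − 1) + v_q(a+1)` if `d ∣ a+1` and `d ≠ 1`; equals `v_q(a+1)` if `d = 1`;
and equals `0` if `d ∤ a+1`. -/
theorem padicValNat_sigma (p q a : ℕ) (hp : p.Prime) (hq : q.Prime) (hpq : p ≠ q)
    (hq3 : 3 ≤ q) (ha : 0 < a) :
    (orderOf (p : ZMod q) ∣ a + 1 → orderOf (p : ZMod q) ≠ 1 →
      padicValNat q ((ArithmeticFunction.sigma 1) (p ^ a)) =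
        padicValNat q (p ^ orderOf (p : ZMod q) - 1) + padicValNat q (a + 1)) ∧
    (orderOf (p : ZMod q) = 1 →
      padicValNat q ((ArithmeticFunction.sigma 1) (p ^ a)) = padicValNat q (a + 1)) ∧
    (¬ orderOf (p : ZMod q) ∣ a + 1 →
      padicValNat q ((ArithmeticFunction.sigma 1) (p ^ a)) = 0) := by
  haveI hq' : Fact q.Prime := ⟨hq⟩
  have hqodd : Odd q := hq.odd_of_ne_two (by omega)
  have hp1 : 1 < p := hp.one_lt
  have hqp : ¬ q ∣ p := fun h => hpq ((Nat.prime_dvd_prime_iff_eq hq hp).mp h).symm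
  have hpne0 : (p : ZMod q) ≠ 0 := by
    rwa [Ne, ZMod.natCast_eq_zero_iff]
  set d := orderOf (p : ZMod q) with hd
  have hpow : (p : ZMod q) ^ (q - 1) = 1 := ZMod.pow_card_sub_one_eq_one hpne0
  have hddvd : d ∣ q - 1 := orderOf_dvd_of_pow_eq_one hpow
  have hdpos : 0 < d :=
    orderOf_pos_iff.mpr (isOfFinOrder_iff_pow_eq_one.mpr ⟨q - 1, by omega, hpow⟩)
  have hqd : ¬ q ∣ d := by
    intro h
    have := Nat.le_of_dvd hdpos h
    have := Nat.le_of_dvd (by omega) hddvd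
    omega
  -- key divisibility criterion
  have key : ∀ n : ℕ, q ∣ p ^ n - 1 ↔ d ∣ n := by
    intro n
    rw [← ZMod.natCast_eq_zero_iff,
      Nat.cast_sub (Nat.one_le_pow _ _ (by omega)), Nat.cast_pow, Nat.cast_one, sub_eq_zero]
    exact ⟨fun h => orderOf_dvd_of_pow_eq_one h, fun h => orderOf_dvd_iff_pow_eq_one.mp h⟩
  -- sigma as geometric sum, and its product with p - 1
  have hsig : (ArithmeticFunction.sigma 1) (p ^ a) = ∑ k ∈ Finset.range (a + 1), p ^ k :=
    ArithmeticFunction.sigma_one_apply_prime_pow hp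
  have hmul : (ArithmeticFunction.sigma 1) (p ^ a) * (p - 1) = p ^ (a + 1) - 1 := by
    rw [hsig]; exact geom_sum_mul_of_one_le (by omega) (a + 1)
  have hsigpos : 0 < (ArithmeticFunction.sigma 1) (p ^ a) := by
    rw [hsig]
    exact Finset.sum_pos (fun i _ => pow_pos (by omega) i) Finset.nonempty_range_add_one
  have hval : padicValNat q ((ArithmeticFunction.sigma 1) (p ^ a)) + padicValNat q (p - 1) =
      padicValNat q (p ^ (a + 1) - 1) := by
    rw [← padicValNat.mul (by omega) (by omega), hmul]
  refine ⟨?_, ?_, ?_⟩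
  · -- d ∣ a + 1, d ≠ 1
    intro hdvd hd1
    have hqp1 : ¬ q ∣ p - 1 := by
      rw [show p - 1 = p ^ 1 - 1 by ring_nf, key, Nat.dvd_one]
      exact hd1
    obtain ⟨k, hk⟩ := hdvd
    have hk0 : k ≠ 0 := by rintro rfl; omega
    have h1 : padicValNat q (p ^ (a + 1) - 1) = padicValNat q (p ^ d - 1) + padicValNat q k := by
      have := padicValNat.pow_sub_pow (p := q) hqodd (x := p ^ d) (y := 1)
        (Nat.one_lt_pow (by omega) hp1) ((key d).mpr dvd_rfl)
        (fun h => hqp (hq.dvd_of_dvd_pow h)) hk0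
      rw [one_pow] at this
      rw [hk, pow_mul]
      exact this
    have h2 : padicValNat q (a + 1) = padicValNat q k := by
      rw [hk, padicValNat.mul (by omega) hk0,
        padicValNat.eq_zero_of_not_dvd hqd, zero_add]
    rw [padicValNat.eq_zero_of_not_dvd hqp1, add_zero] at hval
    rw [hval, h1, h2]
  · -- d = 1
    intro hd1
    have hqp1 : q ∣ p - 1 := by
      rw [show p - 1 = p ^ 1 - 1 by ring_nf, key, hd1]
    have h1 : padicValNat q (p ^ (a + 1) - 1) =
        padicValNat q (p - 1) + padicValNat q (a + 1) := by
      have := padicValNat.pow_sub_pow (p := q) hqodd (x := p) (y := 1) hp1 hqp1 hqp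
        (n := a + 1) (by omega)
      rwa [one_pow] at this
    omega
  · -- ¬ d ∣ a + 1
    intro hndvd
    have : ¬ q ∣ (ArithmeticFunction.sigma 1) (p ^ a) := by
      intro h
      exact ((key (a + 1)).not.mpr hndvd) (h.trans ⟨p - 1, hmul.symm⟩)
    exact padicValNat.eq_zero_of_not_dvd this
end

section
/- Let q be a prime with q > 5 and let l be a positive integer. Then 5 divides σ(q^(2l)) if and only if q ≡ 1 (mod 10) and 2l + 1 ≡ 0 (mod 5). -/
/-!
Since `σ(q^(2l)) = 1 + q + ⋯ + q^(2l)`, the question is when this geometric sum vanishes in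
`ZMod 5`. If `q ≡ 1` the sum is `2l + 1`. Otherwise it vanishes only if `q^(2l+1) = 1`, which is
impossible: the exponent `2l + 1` is odd, hence coprime to the order `4` of `(ZMod 5)ˣ`.
-/

namespace ZMod

variable {p : ℕ} [Fact p.Prime]

theorem eq_one_of_pow_eq_one_of_coprime {x : ZMod p} {n : ℕ} (hn : n ≠ 0)
    (hcop : n.Coprime (p - 1)) (h : x ^ n = 1) : x = 1 := by
  have hx : x ≠ 0 := by
    rintro rfl
    simp [zero_pow hn] at h
  exact (pow_eq_one_iff_of_coprime hcop).mp ⟨h, pow_card_sub_one_eq_one hx⟩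

theorem geom_sum_eq_zero_iff_of_coprime {x : ZMod p} {n : ℕ} (hn : n ≠ 0)
    (hcop : n.Coprime (p - 1)) :
    ∑ i ∈ Finset.range n, x ^ i = 0 ↔ x = 1 ∧ (n : ZMod p) = 0 := by
  by_cases hx : x = 1
  · simp [hx]
  · have hsub : x - 1 ≠ 0 := sub_ne_zero.mpr hx
    rw [geom_sum_eq hx, div_eq_zero_iff, sub_eq_zero, or_iff_left hsub]
    exact iff_of_false (fun h => hx (eq_one_of_pow_eq_one_of_coprime hn hcop h)) (fun h => hx h.1)

end ZMod

theorem Nat.Prime.mod_ten_eq_one_iff {q : ℕ} (hq : q.Prime) : q % 10 = 1 ↔ q % 5 = 1 := by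
  rcases hq.eq_two_or_odd with rfl | hodd
  · norm_num
  · omega

theorem five_dvd_sigma_iff_general (q l : ℕ) (hq : q.Prime) :
    5 ∣ (ArithmeticFunction.sigma 1) (q ^ (2 * l)) ↔
      q % 10 = 1 ∧ (2 * l + 1) % 5 = 0 := by
  have : Fact (Nat.Prime 5) := ⟨by norm_num⟩
  have hcop : (2 * l + 1).Coprime (5 - 1) :=
    Nat.Coprime.pow_right 2 (Nat.coprime_two_right.mpr (odd_two_mul_add_one l))
  rw [ArithmeticFunction.sigma_one_apply_prime_pow hq, ← ZMod.natCast_eq_zero_iff]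
  simp only [Nat.cast_sum, Nat.cast_pow]
  rw [ZMod.geom_sum_eq_zero_iff_of_coprime (Nat.add_one_ne_zero _) hcop, hq.mod_ten_eq_one_iff,
    ← Nat.cast_one, ZMod.natCast_eq_natCast_iff', ZMod.natCast_eq_zero_iff,
    Nat.dvd_iff_mod_eq_zero]

/-- Let `q > 5` be a prime and `l ≥ 1`. Then `5 ∣ σ(q^(2l))` iff `q ≡ 1 [MOD 10]` and
`2l + 1 ≡ 0 [MOD 5]`. -/
theorem five_dvd_sigma_iff (q l : ℕ) (hq : q.Prime) (hq5 : 5 < q) (hl : 0 < l) :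
    5 ∣ (ArithmeticFunction.sigma 1) (q ^ (2 * l)) ↔
      q % 10 = 1 ∧ (2 * l + 1) % 5 = 0 :=
  five_dvd_sigma_iff_general q l hq
end

section
/- If N is a friend of 10, then: (i) for every prime p dividing N, every prime divisor of σ(p^(v_p(N))) either equals 3 or divides N; and (ii) for every prime p dividing N there exists a prime q dividing N with q ≠ p such that p divides σ(q^(v_q(N))). -/
open ArithmeticFunction Finset

private lemma sigma_split {N : ℕ} (hN : N ≠ 0) (p : ℕ) (hp : p.Prime) :
    (ArithmeticFunction.sigma 1) N =
      (ArithmeticFunction.sigma 1) (p ^ N.factorization p) *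
        (ArithmeticFunction.sigma 1) (ordCompl[p] N) := by
  conv_lhs => rw [← Nat.ordProj_mul_ordCompl_eq_self N p]
  exact isMultiplicative_sigma.map_mul_of_coprime
    ((Nat.coprime_ordCompl hp hN).pow_left _)

private lemma prime_not_dvd_sigma_pow {p k : ℕ} (hp : p.Prime) :
    ¬ p ∣ (ArithmeticFunction.sigma 1) (p ^ k) := by
  rw [sigma_one_apply_prime_pow hp, Finset.sum_range_succ']
  intro h
  have h1 : p ∣ ∑ i ∈ Finset.range k, p ^ (i + 1) :=
    Finset.dvd_sum fun i _ => dvd_pow_self p (Nat.succ_ne_zero i)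
  have h2 : p ∣ p ^ 0 := (Nat.dvd_add_right h1).mp h
  rw [pow_zero, Nat.dvd_one] at h2
  exact hp.one_lt.ne' h2

private lemma self_le_sigma {n : ℕ} (hn : n ≠ 0) :
    n ≤ (ArithmeticFunction.sigma 1) n := by
  rw [sigma_one_apply, Nat.sum_divisors_eq_sum_properDivisors_add_self]
  omega

private lemma sigma_eq_self {n : ℕ} (hn : n ≠ 0)
    (h : (ArithmeticFunction.sigma 1) n = n) : n = 1 := by
  by_contra h1
  rw [sigma_one_apply, Nat.sum_divisors_eq_sum_properDivisors_add_self] at h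
  have h2 : 1 ∈ n.properDivisors := Nat.one_mem_properDivisors_iff_one_lt.mpr (by omega)
  have h3 : (1 : ℕ) ≤ ∑ d ∈ n.properDivisors, d :=
    Finset.single_le_sum (f := fun d => d) (fun i _ => Nat.zero_le i) h2
  omega

private lemma sum_two_pow (n : ℕ) : ∑ i ∈ Finset.range n, 2 ^ i = 2 ^ n - 1 := by
  induction n with
  | zero => simp
  | succ k ih =>
    rw [Finset.sum_range_succ, ih]
    have : 0 < 2 ^ k := Nat.pow_pos (by norm_num)
    rw [pow_succ]
    omega

/-- There is no `m > 2` with `σ(m)/m = 3/2`. -/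
private lemma no_three_halves {m : ℕ} (hm2 : 2 < m)
    (key : 2 * (ArithmeticFunction.sigma 1) m = 3 * m) : False := by
  have hm0 : m ≠ 0 := by omega
  have h2m : 2 ∣ m := (Nat.prime_two.dvd_mul.mp ⟨_, key.symm⟩).resolve_left (by norm_num)
  obtain ⟨P, u, hP2, hu0, hmu, hE, hus⟩ :
      ∃ P u : ℕ, 2 ≤ P ∧ u ≠ 0 ∧ P * u = m ∧
        2 * (ArithmeticFunction.sigma 1) m + 2 * (ArithmeticFunction.sigma 1) u =
          4 * P * (ArithmeticFunction.sigma 1) u ∧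
        u ≤ (ArithmeticFunction.sigma 1) u := by
    have hb1 : 1 ≤ m.factorization 2 :=
      (Nat.Prime.pow_dvd_iff_le_factorization Nat.prime_two hm0).mp (by simpa using h2m)
    have hu0 : ordCompl[2] m ≠ 0 := (Nat.ordCompl_pos 2 hm0).ne'
    refine ⟨2 ^ m.factorization 2, ordCompl[2] m, ?_, hu0,
      Nat.ordProj_mul_ordCompl_eq_self m 2, ?_, self_le_sigma hu0⟩
    · calc (2:ℕ) = 2 ^ 1 := rfl
        _ ≤ 2 ^ m.factorization 2 := Nat.pow_le_pow_right (by norm_num) hb1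
    · have hσm : (ArithmeticFunction.sigma 1) m =
          (2 ^ (m.factorization 2 + 1) - 1) * (ArithmeticFunction.sigma 1) (ordCompl[2] m) := by
        rw [sigma_split hm0 2 Nat.prime_two, sigma_one_apply_prime_pow Nat.prime_two,
          sum_two_pow]
      rw [hσm]
      have h1 : (1:ℕ) ≤ 2 ^ (m.factorization 2 + 1) := Nat.one_le_two_pow
      have h2 : (2:ℕ) ^ (m.factorization 2 + 1) = 2 * 2 ^ m.factorization 2 := by
        rw [pow_succ]; ring
      set s := (ArithmeticFunction.sigma 1) (ordCompl[2] m)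
      rw [Nat.sub_mul, one_mul]
      have h3 : s ≤ 2 ^ (m.factorization 2 + 1) * s :=
        Nat.le_mul_of_pos_left s (by positivity)
      rw [h2] at h3 ⊢
      ring_nf
      ring_nf at h3
      omega
  -- now pure arithmetic
  set s := (ArithmeticFunction.sigma 1) u with hsdef
  have hkey : 3 * (P * u) + 2 * s = 4 * P * s := by
    calc 3 * (P * u) + 2 * s = 3 * m + 2 * s := by rw [hmu]
      _ = 2 * (ArithmeticFunction.sigma 1) m + 2 * s := by omega
      _ = 4 * P * s := hE
  have hu1 : 1 ≤ u := Nat.one_le_iff_ne_zero.mpr hu0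
  have hs1 : 1 ≤ s := le_trans hu1 hus
  -- P ≤ 2
  have hle : 4 * P * s ≤ 3 * P * s + 2 * s := by
    calc 4 * P * s = 3 * (P * u) + 2 * s := hkey.symm
      _ ≤ 3 * (P * s) + 2 * s := by
          have := Nat.mul_le_mul_left P hus
          omega
      _ = 3 * P * s + 2 * s := by ring_nf
  have hPle : P * s ≤ 2 * s := by nlinarith
  have hP : P = 2 := by
    have := Nat.le_of_mul_le_mul_right (by omega : P * s ≤ 2 * s) (by omega : 0 < s)
    omega
  subst hP
  have hsu : s = u := by omega
  have : u = 1 := sigma_eq_self hu0 (by omega)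
  omega

private lemma exists_prime_of_dvd_sigma {p M : ℕ} (hp : p.Prime) (hM : M ≠ 0)
    (h : p ∣ (ArithmeticFunction.sigma 1) M) :
    ∃ q : ℕ, q.Prime ∧ q ∣ M ∧ p ∣ (ArithmeticFunction.sigma 1) (q ^ M.factorization q) := by
  rw [isMultiplicative_sigma.multiplicative_factorization _ hM] at h
  obtain ⟨q, hq, hdvd⟩ := hp.prime.exists_mem_finset_dvd h
  rw [Nat.support_factorization] at hq
  exact ⟨q, Nat.prime_of_mem_primeFactors hq, Nat.dvd_of_mem_primeFactors hq, hdvd⟩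

/-- If `N` is a friend of 10, then (i) for every prime `p ∣ N`, every prime divisor of
`σ(p^(v_p(N)))` either equals 3 or divides `N`; and (ii) for every prime `p ∣ N`
there is a prime `q ∣ N` with `q ≠ p` such that `p ∣ σ(q^(v_q(N)))`. -/
theorem friend_of_ten_factor_structure (N : ℕ) (hN : 10 < N)
    (hfriend : 5 * (ArithmeticFunction.sigma 1) N = 9 * N) :
    (∀ p : ℕ, p.Prime → p ∣ N →
      ∀ r : ℕ, r.Prime → r ∣ (ArithmeticFunction.sigma 1) (p ^ (N.factorization p)) →
        r = 3 ∨ r ∣ N) ∧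
    (∀ p : ℕ, p.Prime → p ∣ N →
      ∃ q : ℕ, q.Prime ∧ q ∣ N ∧ q ≠ p ∧
        p ∣ (ArithmeticFunction.sigma 1) (q ^ (N.factorization q))) := by
  have hN0 : N ≠ 0 := by omega
  constructor
  · -- part (i)
    intro p hp hpN r hr hrσ
    have h1 : r ∣ (ArithmeticFunction.sigma 1) N :=
      hrσ.trans ⟨_, sigma_split hN0 p hp⟩
    have h2 : r ∣ 9 * N := hfriend ▸ h1.mul_left 5
    rcases hr.dvd_mul.mp h2 with h3 | h3
    · have h9 : (9 : ℕ) = 3 ^ 2 := by norm_num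
      exact Or.inl ((Nat.prime_dvd_prime_iff_eq hr Nat.prime_three).mp
        (hr.dvd_of_dvd_pow (h9 ▸ h3)))
    · exact Or.inr h3
  · -- part (ii)
    intro p hp hpN
    have hpσ : p ∣ (ArithmeticFunction.sigma 1) N := by
      by_cases hp5 : p = 5
      · subst hp5
        by_contra h5
        have ha1 : 1 ≤ N.factorization 5 :=
          (Nat.Prime.pow_dvd_iff_le_factorization (by norm_num) hN0).mp (by simpa using hpN)
        have ha : N.factorization 5 = 1 := by
          by_contra hcon
          have h25 : (25 : ℕ) ∣ N := by
            have := (Nat.Prime.pow_dvd_iff_le_factorization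
              (p := 5) (k := 2) (by norm_num) hN0).mpr (by omega)
            norm_num at this
            exact this
          have h9 : (25 : ℕ) ∣ 5 * (ArithmeticFunction.sigma 1) N := by
            rw [hfriend]; exact h25.mul_left 9
          obtain ⟨c, hc⟩ := h9
          exact h5 ⟨c, by omega⟩
        have hm : 5 * (N / 5) = N := by
          have := Nat.ordProj_mul_ordCompl_eq_self N 5
          rwa [ha, pow_one] at this
        have h6 : (ArithmeticFunction.sigma 1) 5 = 6 := by
          have := sigma_one_apply_prime_pow (p := 5) (i := 1) (by norm_num)
          simpa [Finset.sum_range_succ] using this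
        have hσN : (ArithmeticFunction.sigma 1) N =
            6 * (ArithmeticFunction.sigma 1) (N / 5) := by
          have := sigma_split hN0 5 (by norm_num)
          rwa [ha, pow_one, h6] at this
        exact no_three_halves (m := N / 5) (by omega)
          (by rw [hσN] at hfriend; omega)
      · have h1 : p ∣ 5 * (ArithmeticFunction.sigma 1) N := hfriend ▸ hpN.mul_left 9
        rcases hp.dvd_mul.mp h1 with h2 | h2
        · exact absurd ((Nat.prime_dvd_prime_iff_eq hp (by norm_num)).mp h2) hp5
        · exact h2
    have hM0 : ordCompl[p] N ≠ 0 := (Nat.ordCompl_pos p hN0).ne'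
    have hpM : p ∣ (ArithmeticFunction.sigma 1) (ordCompl[p] N) := by
      rw [sigma_split hN0 p hp] at hpσ
      exact (hp.dvd_mul.mp hpσ).resolve_left (prime_not_dvd_sigma_pow hp)
    obtain ⟨q, hq, hqM, hpσq⟩ := exists_prime_of_dvd_sigma hp hM0 hpM
    have hqp : q ≠ p := by
      rintro rfl
      exact hq.one_lt.ne' ((Nat.coprime_ordCompl hp hN0).eq_one_of_dvd hqM)
    have hfact : (ordCompl[p] N).factorization q = N.factorization q := by
      rw [Nat.factorization_ordCompl, Finsupp.erase_ne hqp]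
    exact ⟨q, hq, hqM.trans (Nat.ordCompl_dvd N p), hqp, hfact ▸ hpσq⟩
end
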